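/- arXiv:1204.0815 — 2 statements merged into one kernel-verified Lean document; each statement's English description precedes it below -/
import Mathlib

section
/- Let 0 < a < b, let f ∈ H²(A_{a,b}), and let f_a* and f_b* denote its L² boundary functions on the circles of radius a and b respectively. Then for every z ∈ A_{a,b} the Cauchy formula holds: f(z) = (1/2π) ∫₀^{2π} f_b*(be^{iφ}) · (be^{iφ})/(be^{iφ} − z) dφ − (1/2π) ∫₀^{2π} f_a*(ae^{iφ}) · (ae^{iφ})/(ae^{iφ} − z) dφ. -/
/-! The dslope of `f` at `z` is holomorphic on the whole annulus, so its integrals over the two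
circles |w| = r < |z| < R agree; unwinding the dslope gives Cauchy's formula
`2πi f(z) = ∮_{|w|=R} f(w)/(w-z) dw - ∮_{|w|=r} f(w)/(w-z) dw` on every such sub-annulus.
As `r ↓ a` and `R ↑ b` the restrictions of `f` to the circles converge in `L²`, hence in `L¹`, to
the boundary functions, while the Cauchy kernels stay bounded and converge pointwise, so both
sides pass to the limit. -/

open MeasureTheory Complex Filter Set

noncomputable section

/-- The annulus `A_{a,b} = {z : ℂ | a < |z| < b}`. -/
def cAnnulus (a b : ℝ) : Set ℂ := {z : ℂ | a < ‖z‖ ∧ ‖z‖ < b}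

/-- The point `r·e^{iφ}` on the circle of radius `r`. -/
def circ (r φ : ℝ) : ℂ := (r : ℂ) * Complex.exp (φ * Complex.I)

/-- The squared mean `M₂(f;r)² = (1/2π) ∫₀^{2π} |f(re^{iφ})|² dφ`. -/
def M2sq (f : ℂ → ℂ) (r : ℝ) : ℝ :=
  (1 / (2 * Real.pi)) * ∫ φ in (0:ℝ)..(2 * Real.pi), ‖f (circ r φ)‖ ^ 2

/-- Membership in the Hardy space `H²(A_{a,b})` of the annulus: `f` is analytic on the
annulus and `sup_{a<r<b} M₂(f;r) < ∞`. -/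
def MemH2 (a b : ℝ) (f : ℂ → ℂ) : Prop :=
  AnalyticOnNhd ℂ f (cAnnulus a b) ∧ ∃ C : ℝ, ∀ r ∈ Set.Ioo a b, M2sq f r ≤ C

/-- `g : ℝ → ℂ` (as a function of the angle `φ`) is the radial `L²` boundary limit of `f`
at radius `r₀`, the approach being through radii in `s`. -/
def IsBoundaryLimit (f : ℂ → ℂ) (r₀ : ℝ) (s : Set ℝ) (g : ℝ → ℂ) : Prop :=
  Filter.Tendsto (fun r => ∫ φ in (0:ℝ)..(2 * Real.pi), ‖f (circ r φ) - g φ‖ ^ 2)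
    (nhdsWithin r₀ s) (nhds 0)

/-- Membership in `L²(S¹)` for a boundary function given as a function of the angle. -/
def MemL2Circle (g : ℝ → ℂ) : Prop :=
  MemLp g 2 (volume.restrict (Set.Ioc (0:ℝ) (2 * Real.pi)))

open Metric Topology
open scoped Real

section CauchyFormula

variable {E : Type*} [NormedAddCommGroup E] [NormedSpace ℂ E] [CompleteSpace E]

theorem circleIntegral_dslope_eq {f : ℂ → E} {c w : ℂ} {R : ℝ} (hR : 0 ≤ R)
    (hw : w ∉ sphere c R) (hf : ContinuousOn f (sphere c R)) :
    (∮ z in C(c, R), dslope f w z) =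
      (∮ z in C(c, R), (z - w)⁻¹ • f z) - (∮ z in C(c, R), (z - w)⁻¹) • f w := by
  have hinv : ContinuousOn (fun z : ℂ => (z - w)⁻¹) (sphere c R) :=
    (continuousOn_id.sub continuousOn_const).inv₀ fun z hz =>
      sub_ne_zero.2 (ne_of_mem_of_not_mem hz hw)
  rw [← circleIntegral.integral_smul_const, ← circleIntegral.integral_sub
    (f := fun z => (z - w)⁻¹ • f z) (g := fun z => (z - w)⁻¹ • f w)
    ((hinv.smul hf).circleIntegrable hR) ((hinv.smul continuousOn_const).circleIntegrable hR)]
  refine circleIntegral.integral_congr hR fun z hz => ?_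
  rw [dslope_of_ne f (ne_of_mem_of_not_mem hz hw), slope_def_module, smul_sub]

theorem circleIntegral_sub_inv_of_notMem_closedBall {c w : ℂ} {R : ℝ} (hR : 0 ≤ R)
    (hw : w ∉ closedBall c R) : (∮ z in C(c, R), (z - w)⁻¹) = 0 :=
  DiffContOnCl.circleIntegral_eq_zero hR <|
    ((differentiableOn_id.sub_const w).inv fun _ hz => sub_ne_zero.2 hz).diffContOnCl_ball
      fun _ hz h => hw (h ▸ hz)

theorem circleIntegral_sub_inv_smul_sub_of_differentiableOn_annulus {f : ℂ → E} {c w : ℂ}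
    {r R : ℝ} (hr : 0 < r) (hw : w ∈ ball c R \ closedBall c r)
    (hf : DifferentiableOn ℂ f (closedBall c R \ ball c r)) :
    (∮ z in C(c, R), (z - w)⁻¹ • f z) - (∮ z in C(c, r), (z - w)⁻¹ • f z) =
      (2 * π * I : ℂ) • f w := by
  have hrR : r ≤ R := le_of_lt <| not_le.1 fun h =>
    hw.2 (closedBall_subset_closedBall h (ball_subset_closedBall hw.1))
  have hnhds : ∀ x ∈ ball c R \ closedBall c r, closedBall c R \ ball c r ∈ 𝓝 x := fun x hx =>
    mem_of_superset ((isOpen_ball.sdiff isClosed_closedBall).mem_nhds hx)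
      (sdiff_subset_sdiff ball_subset_closedBall ball_subset_closedBall)
  have hsphere : ∀ ρ, r ≤ ρ → ρ ≤ R → sphere c ρ ⊆ closedBall c R \ ball c r :=
    fun ρ h₁ h₂ z hz => ⟨mem_closedBall.2 ((mem_sphere.1 hz).trans_le h₂),
      fun h => (mem_ball.1 h).not_ge ((mem_sphere.1 hz).symm ▸ h₁)⟩
  have hslope : DifferentiableOn ℂ (dslope f w) (closedBall c R \ ball c r) :=
    (differentiableOn_dslope (hnhds w hw)).2 hf
  have hcauchy : (∮ z in C(c, R), dslope f w z) = ∮ z in C(c, r), dslope f w z :=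
    circleIntegral_eq_of_differentiable_on_annulus_off_countable hr hrR countable_empty
      hslope.continuousOn fun x hx => hslope.differentiableAt (hnhds x hx.1)
  rw [circleIntegral_dslope_eq (hr.le.trans hrR) (fun h => (mem_ball.1 hw.1).ne (mem_sphere.1 h))
      (hf.continuousOn.mono (hsphere R hrR le_rfl)),
    circleIntegral_dslope_eq hr.le (fun h => hw.2 (sphere_subset_closedBall h))
      (hf.continuousOn.mono (hsphere r le_rfl hrR)),
    circleIntegral.integral_sub_inv_of_mem_ball hw.1,
    circleIntegral_sub_inv_of_notMem_closedBall hr.le hw.2, zero_smul, sub_zero] at hcauchy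
  rw [← hcauchy, sub_sub_cancel]

end CauchyFormula

section LTwoConvergence

variable {α ι : Type*} [MeasurableSpace α] {μ : Measure α} [IsFiniteMeasure μ] {l : Filter ι}

theorem tendsto_integral_norm_of_tendsto_integral_norm_sq {E : Type*} [NormedAddCommGroup E]
    {u : ι → α → E} (hu : ∀ᶠ i in l, MemLp (u i) 2 μ)
    (h : Tendsto (fun i => ∫ x, ‖u i x‖ ^ 2 ∂μ) l (𝓝 0)) :
    Tendsto (fun i => ∫ x, ‖u i x‖ ∂μ) l (𝓝 0) := by
  have hCS : ∀ᶠ i in l,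
      ∫ x, ‖u i x‖ ∂μ ≤ (∫ x, ‖u i x‖ ^ 2 ∂μ) ^ (1 / 2 : ℝ) * μ.real univ ^ (1 / 2 : ℝ) := by
    filter_upwards [hu] with i hi
    have := integral_mul_norm_le_Lp_mul_Lq (f := fun x => ‖u i x‖) (g := fun _ => (1 : ℝ))
      Real.HolderConjugate.two_two (by simpa using hi.norm) (memLp_const 1)
    simpa [Real.rpow_two] using this
  have hlim : Tendsto (fun i => (∫ x, ‖u i x‖ ^ 2 ∂μ) ^ (1 / 2 : ℝ) * μ.real univ ^ (1 / 2 : ℝ))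
      l (𝓝 0) := by
    simpa using (h.rpow_const (p := 1 / 2) (Or.inr (by norm_num))).mul_const
      (μ.real univ ^ (1 / 2 : ℝ))
  exact squeeze_zero' (Eventually.of_forall fun i => integral_nonneg fun x => norm_nonneg _)
    hCS hlim

theorem tendsto_integral_mul_of_tendsto_integral_norm_sub_sq {𝕜 : Type*} [RCLike 𝕜]
    [l.IsCountablyGenerated] {F K : ι → α → 𝕜} {g k : α → 𝕜} {M : ℝ}
    (hF : ∀ᶠ i in l, MemLp (F i) 2 μ) (hg : MemLp g 2 μ)
    (hFg : Tendsto (fun i => ∫ x, ‖F i x - g x‖ ^ 2 ∂μ) l (𝓝 0))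
    (hKm : ∀ᶠ i in l, AEStronglyMeasurable (K i) μ) (hKb : ∀ᶠ i in l, ∀ᵐ x ∂μ, ‖K i x‖ ≤ M)
    (hKk : ∀ᵐ x ∂μ, Tendsto (fun i => K i x) l (𝓝 (k x))) :
    Tendsto (fun i => ∫ x, F i x * K i x ∂μ) l (𝓝 (∫ x, g x * k x ∂μ)) := by
  have hg₁ : Integrable g μ := hg.integrable one_le_two
  have hFg₂ : ∀ᶠ i in l, MemLp (fun x => F i x - g x) 2 μ := hF.mono fun i hi => hi.sub hg
  have hmain : Tendsto (fun i => ∫ x, g x * K i x ∂μ) l (𝓝 (∫ x, g x * k x ∂μ)) :=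
    tendsto_integral_filter_of_dominated_convergence (fun x => ‖g x‖ * M)
      (hKm.mono fun i hi => hg₁.aestronglyMeasurable.mul hi)
      (hKb.mono fun i hi => hi.mono fun x hx => by rw [norm_mul]; gcongr)
      (hg₁.norm.mul_const M) (hKk.mono fun x hx => hx.const_mul (g x))
  have herror : Tendsto (fun i => ∫ x, (F i x - g x) * K i x ∂μ) l (𝓝 0) := by
    refine squeeze_zero_norm' ?_ (by
      simpa using (tendsto_integral_norm_of_tendsto_integral_norm_sq hFg₂ hFg).mul_const M)
    filter_upwards [hFg₂, hKb] with i hi hKi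
    rw [← integral_mul_const]
    refine norm_integral_le_of_norm_le ((hi.integrable one_le_two).norm.mul_const M) ?_
    filter_upwards [hKi] with x hx
    rw [norm_mul]
    gcongr
  rw [← zero_add (∫ x, g x * k x ∂μ)]
  refine (herror.add hmain).congr' ?_
  filter_upwards [hFg₂, hKm, hKb] with i hi hKmi hKi
  rw [← integral_add ((hi.integrable one_le_two).mul_bdd hKmi hKi) (hg₁.mul_bdd hKmi hKi)]
  simp only [sub_mul, sub_add_cancel]

end LTwoConvergence

theorem Continuous.memLp_restrict_Ioc {E : Type*} [NormedAddCommGroup E] {g : ℝ → E}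
    (hg : Continuous g) (p : ENNReal) (a b : ℝ) : MemLp g p (volume.restrict (Ioc a b)) := by
  obtain ⟨C, hC⟩ := (isCompact_Icc (a := a) (b := b)).exists_bound_of_continuousOn
    hg.continuousOn
  exact .of_bound hg.aestronglyMeasurable.restrict C
    (ae_restrict_of_forall_mem measurableSet_Ioc fun x hx => hC x (Ioc_subset_Icc_self hx))

theorem norm_circ (r φ : ℝ) : ‖circ r φ‖ = |r| := by
  simp [circ, norm_exp_ofReal_mul_I]

theorem continuous_circ (r : ℝ) : Continuous (circ r) := by
  unfold circ; fun_prop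

theorem circ_eq_circleMap (r φ : ℝ) : circ r φ = circleMap 0 r φ := by
  simp [circ, circleMap]

theorem circ_sub_ne_zero {r : ℝ} {z : ℂ} (h : |r| ≠ ‖z‖) (φ : ℝ) : circ r φ - z ≠ 0 :=
  sub_ne_zero.2 fun hz => h (by rw [← norm_circ r φ, hz])

theorem norm_circ_div_circ_sub_le {r : ℝ} {z : ℂ} (h : |r| ≠ ‖z‖) (φ : ℝ) :
    ‖circ r φ / (circ r φ - z)‖ ≤ |r| / |(|r| - ‖z‖)| := by
  rw [norm_div, norm_circ]
  refine div_le_div_of_nonneg_left (abs_nonneg r) (abs_pos.2 (sub_ne_zero.2 h)) ?_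
  simpa [norm_circ] using abs_norm_sub_norm_le (circ r φ) z

def circleCauchyIntegral (r : ℝ) (g : ℝ → ℂ) (z : ℂ) : ℂ :=
  ∫ φ in (0 : ℝ)..2 * π, g φ * (circ r φ / (circ r φ - z))

theorem circleIntegral_sub_inv_smul_eq_I_mul (f : ℂ → ℂ) (r : ℝ) (z : ℂ) :
    (∮ w in C(0, r), (w - z)⁻¹ • f w) = I * circleCauchyIntegral r (fun φ => f (circ r φ)) z := by
  rw [circleIntegral, circleCauchyIntegral, ← intervalIntegral.integral_const_mul]
  refine intervalIntegral.integral_congr fun φ _ => ?_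
  simp only [deriv_circleMap, ← circ_eq_circleMap, smul_eq_mul]
  ring

theorem eq_sub_circleCauchyIntegral {f : ℂ → ℂ} {z : ℂ} {r R : ℝ} (hr : 0 < r)
    (hrz : r < ‖z‖) (hzR : ‖z‖ < R) (hf : DifferentiableOn ℂ f (closedBall 0 R \ ball 0 r)) :
    f z = (1 / (2 * π) : ℂ) * circleCauchyIntegral R (fun φ => f (circ R φ)) z
      - (1 / (2 * π) : ℂ) * circleCauchyIntegral r (fun φ => f (circ r φ)) z := by
  have h := circleIntegral_sub_inv_smul_sub_of_differentiableOn_annulus hr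
    ⟨mem_ball_zero_iff.2 hzR, fun h => hrz.not_ge (mem_closedBall_zero_iff.1 h)⟩ hf
  rw [circleIntegral_sub_inv_smul_eq_I_mul, circleIntegral_sub_inv_smul_eq_I_mul,
    smul_eq_mul] at h
  refine mul_left_cancel₀ two_pi_I_ne_zero ?_
  rw [← h]
  field_simp

theorem tendsto_circleCauchyIntegral_of_isBoundaryLimit {f : ℂ → ℂ} {g : ℝ → ℂ} {ρ : ℝ}
    {s : Set ℝ} {z : ℂ} (hρz : |ρ| ≠ ‖z‖) (hf : ∀ r ∈ s, Continuous fun φ => f (circ r φ))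
    (hg : MemL2Circle g) (hfg : IsBoundaryLimit f ρ s g) :
    Tendsto (fun r => circleCauchyIntegral r (fun φ => f (circ r φ)) z) (𝓝[s] ρ)
      (𝓝 (circleCauchyIntegral ρ g z)) := by
  have hπ : 0 ≤ 2 * π := by positivity
  have hbound : ∀ᶠ r in 𝓝 ρ, |r| ≠ ‖z‖ ∧ |r| / |(|r| - ‖z‖)| < |ρ| / |(|ρ| - ‖z‖)| + 1 :=
    (continuous_abs.continuousAt.eventually_ne hρz).and <|
      ContinuousAt.eventually_lt (ContinuousAt.div (by fun_prop) (by fun_prop)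
        (abs_ne_zero.2 (sub_ne_zero.2 hρz))) continuousAt_const (lt_add_one _)
  unfold IsBoundaryLimit at hfg
  simp only [circleCauchyIntegral, intervalIntegral.integral_of_le hπ] at hfg ⊢
  refine tendsto_integral_mul_of_tendsto_integral_norm_sub_sq
    (eventually_nhdsWithin_of_forall fun r hr => (hf r hr).memLp_restrict_Ioc 2 0 (2 * π))
    hg hfg (Eventually.of_forall fun r => by
      apply Measurable.aestronglyMeasurable; unfold circ; fun_prop)
    (nhdsWithin_le_nhds <| hbound.mono fun r hr =>
      ae_of_all _ fun φ => (norm_circ_div_circ_sub_le hr.1 φ).trans hr.2.le)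
    (ae_of_all _ fun φ => ContinuousAt.tendsto ?_ |>.mono_left nhdsWithin_le_nhds)
  exact ContinuousAt.div (by unfold circ; fun_prop) (by unfold circ; fun_prop)
    (circ_sub_ne_zero hρz φ)

theorem hardy_annulus_cauchy_formula_general (a b : ℝ) (ha : 0 < a)
    (f : ℂ → ℂ) (hf : MemH2 a b f) (fa fb : ℝ → ℂ)
    (hfaL2 : MemL2Circle fa) (hfbL2 : MemL2Circle fb)
    (hfa : IsBoundaryLimit f a (Set.Ioo a b) fa)
    (hfb : IsBoundaryLimit f b (Set.Ioo a b) fb) :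
    ∀ z ∈ cAnnulus a b,
      f z = (1 / (2 * Real.pi) : ℂ) *
              (∫ φ in (0:ℝ)..(2 * Real.pi), fb φ * (circ b φ / (circ b φ - z)))
            - (1 / (2 * Real.pi) : ℂ) *
              (∫ φ in (0:ℝ)..(2 * Real.pi), fa φ * (circ a φ / (circ a φ - z))) := by
  rintro z ⟨hza, hzb⟩
  have hd : DifferentiableOn ℂ f (cAnnulus a b) := hf.1.differentiableOn
  have hcirc : ∀ r ∈ Ioo a b, Continuous fun φ => f (circ r φ) := fun r hr =>
    hd.continuousOn.comp_continuous (continuous_circ r) fun φ => by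
      simpa [cAnnulus, norm_circ, abs_of_pos (ha.trans hr.1)] using hr
  have hinner := tendsto_circleCauchyIntegral_of_isBoundaryLimit
    (by rw [abs_of_pos ha]; exact hza.ne) hcirc hfaL2 hfa
  have houter := tendsto_circleCauchyIntegral_of_isBoundaryLimit
    (by rw [abs_of_pos (ha.trans (hza.trans hzb))]; exact hzb.ne') hcirc hfbL2 hfb
  have hcauchy : ∀ r ∈ Ioo a ‖z‖, ∀ R ∈ Ioo ‖z‖ b,
      f z = (1 / (2 * π) : ℂ) * circleCauchyIntegral R (fun φ => f (circ R φ)) z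
        - (1 / (2 * π) : ℂ) * circleCauchyIntegral r (fun φ => f (circ r φ)) z :=
    fun r hr R hR => eq_sub_circleCauchyIntegral (ha.trans hr.1) hr.2 hR.1 <| hd.mono
      fun w hw => ⟨hr.1.trans_le (not_lt.1 (mt mem_ball_zero_iff.2 hw.2)),
        (mem_closedBall_zero_iff.1 hw.1).trans_lt hR.2⟩
  have := left_nhdsWithin_Ioo_neBot hza
  have := right_nhdsWithin_Ioo_neBot hzb
  refine tendsto_nhds_unique (l := 𝓝[Ioo a ‖z‖] a ×ˢ 𝓝[Ioo ‖z‖ b] b)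
    (tendsto_const_nhds.congr' <| eventually_of_mem
      (prod_mem_prod self_mem_nhdsWithin self_mem_nhdsWithin) fun p hp => hcauchy _ hp.1 _ hp.2)
    ((((houter.mono_left (nhdsWithin_mono _ (Ioo_subset_Ioo_left hza.le))).comp
      tendsto_snd).const_mul _).sub
      (((hinner.mono_left (nhdsWithin_mono _ (Ioo_subset_Ioo_right hzb.le))).comp
        tendsto_fst).const_mul _))

/-- The Cauchy formula recovering `f ∈ H²(A_{a,b})` from its two `L²`
boundary functions. -/
theorem hardy_annulus_cauchy_formula (a b : ℝ) (ha : 0 < a) (hab : a < b)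
    (f : ℂ → ℂ) (hf : MemH2 a b f) (fa fb : ℝ → ℂ)
    (hfaL2 : MemL2Circle fa) (hfbL2 : MemL2Circle fb)
    (hfa : IsBoundaryLimit f a (Set.Ioo a b) fa)
    (hfb : IsBoundaryLimit f b (Set.Ioo a b) fb) :
    ∀ z ∈ cAnnulus a b,
      f z = (1 / (2 * Real.pi) : ℂ) *
              (∫ φ in (0:ℝ)..(2 * Real.pi), fb φ * (circ b φ / (circ b φ - z)))
            - (1 / (2 * Real.pi) : ℂ) *
              (∫ φ in (0:ℝ)..(2 * Real.pi), fa φ * (circ a φ / (circ a φ - z))) :=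
  hardy_annulus_cauchy_formula_general a b ha f hf fa fb hfaL2 hfbL2 hfa hfb
end
end

section
/- Let 0 < a' < a < b < b', d ≥ 2, L > 1, N ≥ 1, and let μ be a pseudo-positive measure on the annular region A_{a,b} ⊂ ℝ^d with component measures μ_{k,ℓ} on [a,b]. For each (k,ℓ) let μ^G_{k,ℓ} = Σ_{j=1}^{2N} λ_{k,ℓ;j} δ(t − t_{k,ℓ;j}) be a Gauss–Jacobi quadrature measure with knots in [a,b] and nonnegative weights, exact for all Q ∈ V_{k,d,2N}, and let C_k be constants such that |∫_a^b g dμ_{k,ℓ} − ∫_a^b g dμ^G_{k,ℓ}| ≤ C_k ‖g‖_{H²(A_{a',b'})} for all g ∈ H^{2,k}(A_{a',b'}). Suppose f ∈ H_L²(𝒜_{a',b'}) has finite Laplace–Fourier expansion f(rθ) = Σ_{k ≤ k₀, ℓ} f_{k,ℓ}(r) Y_{k,ℓ}(θ). Then the cubature error satisfies |∫_{A_{a,b}} f dμ − C_N(f)| ≤ ( Σ_{k ≤ k₀, ℓ} C_k² / L^{2k} )^{1/2} · ‖f‖_{H_L²(𝒜_{a',b'})}, where C_N(f) = Σ_{k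 ≤ k₀, ℓ} ∫_a^b f_{k,ℓ}(r) dμ^G_{k,ℓ}(r). -/
open MeasureTheory Complex Filter Set

noncomputable section

/-- The `j`-th Laurent coefficient of `f`, computed on the circle of radius `(a+b)/2`:
`c_j = (1/2π) ∫₀^{2π} f(re^{iφ}) (re^{iφ})^{-j} dφ`. -/
def laurentCoeff (a b : ℝ) (f : ℂ → ℂ) (j : ℤ) : ℂ :=
  (1 / (2 * Real.pi) : ℂ) *
    ∫ φ in (0:ℝ)..(2 * Real.pi), f (circ ((a + b) / 2) φ) * (circ ((a + b) / 2) φ) ^ (-j)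

/-- The squared Hardy norm `‖f‖²_{H²(A_{a,b})} = 2π Σ_{j∈ℤ} |c_j|² (a^{2j} + b^{2j})`. -/
def hardyNormSq (a b : ℝ) (f : ℂ → ℂ) : ℝ :=
  2 * Real.pi * ∑' j : ℤ, ‖laurentCoeff a b f j‖ ^ 2 * (a ^ (2 * j) + b ^ (2 * j))

/-- `g` belongs to the linear span of the functions `z^{k+2j}` (`j ≥ 0`) and
`z^{-d-k+2+2j}` (`j ≥ 0`). -/
def InSpanV (d k : ℕ) (g : ℂ → ℂ) : Prop :=
  ∃ (n : ℕ) (p q : ℕ → ℂ), ∀ z : ℂ, z ≠ 0 →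
    g z = ∑ j ∈ Finset.range n,
      (p j * z ^ ((k : ℤ) + 2 * j) + q j * z ^ (2 + 2 * (j : ℤ) - d - k))

/-- Membership in the component Hardy space `H^{2,k}(A_{a,b})`: the closure in `H²(A_{a,b})`
of the linear span of `z^{k+2j}` and `z^{-d-k+2+2j}` (`j ≥ 0`). -/
def MemH2k (a b : ℝ) (d k : ℕ) (f : ℂ → ℂ) : Prop :=
  MemH2 a b f ∧
    ∀ ε : ℝ, 0 < ε → ∃ g : ℂ → ℂ, InSpanV d k g ∧
      hardyNormSq a b (fun z => f z - g z) < ε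

/-- The unit sphere `S^{d-1}` in `ℝ^d`. -/
abbrev Sph (d : ℕ) := Metric.sphere (0 : EuclideanSpace ℝ (Fin d)) 1

/-- The rotation invariant surface measure `dθ` on the unit sphere `S^{d-1}`. -/
def sphMeasure (d : ℕ) : Measure (Sph d) :=
  (volume : Measure (EuclideanSpace ℝ (Fin d))).toSphere

/-- Evaluation of a polynomial in `d` variables at a point of the sphere `S^{d-1}`. -/
def sphEval {d : ℕ} (P : MvPolynomial (Fin d) ℝ) (θ : Sph d) : ℝ :=
  MvPolynomial.eval (fun i => (θ : EuclideanSpace ℝ (Fin d)) i) P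

/-- The (formal) Laplace operator `Δ = Σ_i ∂²/∂x_i²` on polynomials. -/
def polyLaplacian (d : ℕ) : MvPolynomial (Fin d) ℝ →ₗ[ℝ] MvPolynomial (Fin d) ℝ :=
  ∑ i : Fin d, ((MvPolynomial.pderiv i).toLinearMap).comp (MvPolynomial.pderiv i).toLinearMap

/-- The space `ℋ_k(ℝ^d)` of harmonic homogeneous polynomials of degree `k`. -/
def harmonicHomSubmodule (d k : ℕ) : Submodule ℝ (MvPolynomial (Fin d) ℝ) :=
  MvPolynomial.homogeneousSubmodule (Fin d) ℝ k ⊓ LinearMap.ker (polyLaplacian d)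

/-- An orthonormal basis `Y_{k,ℓ}`, `ℓ = 1,…,a_k`, of the spaces `ℋ_k(ℝ^d)` of harmonic
homogeneous polynomials of degree `k`, orthonormal with respect to the `L²` inner product
on the unit sphere `S^{d-1}`; `a_k = dim ℋ_k(ℝ^d)`. -/
structure SphericalONB (d : ℕ) (ak : ℕ → ℕ) where
  Y : (k : ℕ) → Fin (ak k) → MvPolynomial (Fin d) ℝ
  harmonic : ∀ k ℓ, Y k ℓ ∈ harmonicHomSubmodule d k
  orthonormal : ∀ k (ℓ ℓ' : Fin (ak k)),
    (∫ θ : Sph d, sphEval (Y k ℓ) θ * sphEval (Y k ℓ') θ ∂(sphMeasure d))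
      = if ℓ = ℓ' then 1 else 0
  ortho_of_ne : ∀ k k' (ℓ : Fin (ak k)) (ℓ' : Fin (ak k')), k ≠ k' →
    (∫ θ : Sph d, sphEval (Y k ℓ) θ * sphEval (Y k' ℓ') θ ∂(sphMeasure d)) = 0
  card_eq : ∀ k, ak k = Module.finrank ℝ (harmonicHomSubmodule d k)

/-- The squared norm `‖f‖²_{H_L²} = Σ_{k,ℓ} ‖f_{k,ℓ}‖²_{H²(A_{a,b})} L^{2k}` of an element of
the polyharmonic Hardy space, given through its family of components `F k ℓ ∈ H^{2,k}`. -/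
def HLnormSq (a b L : ℝ) (ak : ℕ → ℕ) (F : (k : ℕ) → Fin (ak k) → ℂ → ℂ) : ℝ :=
  ∑' p : Σ k : ℕ, Fin (ak k), hardyNormSq a b (F p.1 p.2) * L ^ (2 * p.1)

/-- The weighted norms are summable (i.e. `‖f‖_{H_L²} < ∞`). -/
def HLSummable (a b L : ℝ) (ak : ℕ → ℕ) (F : (k : ℕ) → Fin (ak k) → ℂ → ℂ) : Prop :=
  Summable (fun p : Σ k : ℕ, Fin (ak k) => hardyNormSq a b (F p.1 p.2) * L ^ (2 * p.1))

/-- `f(z,θ) = Σ_{k,ℓ} f_{k,ℓ}(z) Y_{k,ℓ}(θ)` on the complexified annulus `𝒜_{a,b}`. -/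
def IsHLRep (a b : ℝ) {d : ℕ} (ak : ℕ → ℕ) (B : SphericalONB d ak)
    (F : (k : ℕ) → Fin (ak k) → ℂ → ℂ) (f : ℂ → Sph d → ℂ) : Prop :=
  ∀ z ∈ cAnnulus a b, ∀ θ : Sph d,
    HasSum (fun p : Σ k : ℕ, Fin (ak k) =>
      F p.1 p.2 z * ((sphEval (B.Y p.1 p.2) θ : ℝ) : ℂ)) (f z θ)

/-- Evaluation of a polynomial in `d` variables at a point of `ℝ^d`. -/
def solidEval {d : ℕ} (P : MvPolynomial (Fin d) ℝ) (x : EuclideanSpace ℝ (Fin d)) : ℝ :=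
  MvPolynomial.eval (fun i => x i) P

/-! Integration against `μ` commutes with the finite Laplace–Fourier sum, and the `(k, ℓ)` term
of `∫ f dμ` is `∫ f_{k,ℓ} dμ_{k,ℓ}`: the defining identity of `μ_{k,ℓ}`, applied to the real and
imaginary parts of `f_{k,ℓ}`. Hence the cubature error is the sum of the component quadrature
errors, each at most `C_k ‖f_{k,ℓ}‖_{H²}`, and Cauchy–Schwarz with the weights `L^{∓k}` bounds
this sum by `(Σ C_k² / L^{2k})^{1/2} ‖f‖_{H_L²}`. -/

lemma hardyNormSq_nonneg (a b : ℝ) (f : ℂ → ℂ) : 0 ≤ hardyNormSq a b f := by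
  refine mul_nonneg (by positivity) (tsum_nonneg fun j => ?_)
  rw [zpow_mul, zpow_mul]
  positivity

lemma ofReal_mem_cAnnulus {a b r : ℝ} (ha : 0 ≤ a) (hr : r ∈ Ioo a b) :
    (r : ℂ) ∈ cAnnulus a b := by
  simpa [cAnnulus, abs_of_pos (ha.trans_lt hr.1)] using hr

lemma Real.sum_mul_sqrt_le_sqrt_sum_div_mul_sqrt_tsum {ι : Type*} (s : Finset ι)
    (c h w : ι → ℝ) (hh : ∀ i, 0 ≤ h i) (hw : ∀ i, 0 < w i)
    (hsum : Summable fun i => h i * w i) :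
    ∑ i ∈ s, c i * √(h i) ≤ √(∑ i ∈ s, c i ^ 2 / w i) * √(∑' i, h i * w i) :=
  calc ∑ i ∈ s, c i * √(h i) = ∑ i ∈ s, c i / √(w i) * √(h i * w i) := by
        refine Finset.sum_congr rfl fun i _ => ?_
        have := Real.sqrt_pos.2 (hw i)
        rw [Real.sqrt_mul (hh i)]
        field_simp
    _ ≤ √(∑ i ∈ s, (c i / √(w i)) ^ 2) * √(∑ i ∈ s, √(h i * w i) ^ 2) :=
        Real.sum_mul_le_sqrt_mul_sqrt s _ _
    _ = √(∑ i ∈ s, c i ^ 2 / w i) * √(∑ i ∈ s, h i * w i) := by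
        simp only [div_pow, Real.sq_sqrt (hw _).le, Real.sq_sqrt (mul_nonneg (hh _) (hw _).le)]
    _ ≤ √(∑ i ∈ s, c i ^ 2 / w i) * √(∑' i, h i * w i) := by
        gcongr
        exact hsum.sum_le_tsum s fun i _ => mul_nonneg (hh i) (hw i).le

lemma isCompact_norm_preimage_Icc {E : Type*} [NormedAddCommGroup E] [ProperSpace E] (a b : ℝ) :
    IsCompact ((‖·‖) ⁻¹' Icc a b : Set E) :=
  (isCompact_closedBall (0 : E) b).of_isClosed_subset (isClosed_Icc.preimage continuous_norm)
    fun _ hx => mem_closedBall_zero_iff.2 hx.2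

lemma ContinuousOn.integrable_of_isCompact_of_ae_mem {X E : Type*} [TopologicalSpace X]
    [T2Space X] [MeasurableSpace X] [OpensMeasurableSpace X] [NormedAddCommGroup E]
    {μ : Measure X} [IsFiniteMeasureOnCompacts μ] {K : Set X} {f : X → E}
    (hf : ContinuousOn f K) (hK : IsCompact K) (hμ : ∀ᵐ x ∂μ, x ∈ K) : Integrable f μ := by
  simpa [IntegrableOn, Measure.restrict_eq_self_of_ae_mem hμ] using
    hf.integrableOn_compact (μ := μ) hK

lemma continuousOn_radial_mul_angular {E : Type*} [NormedAddCommGroup E] [NormedSpace ℝ E]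
    {a b : ℝ} (ha : 0 < a) {g : ℝ → ℂ} (hg : ContinuousOn g (Icc a b)) {Y : E → ℝ}
    (hY : Continuous Y) :
    ContinuousOn (fun x : E => g ‖x‖ * (Y (‖x‖⁻¹ • x) : ℂ)) ((‖·‖) ⁻¹' Icc a b) := by
  have hnormalize : ContinuousOn (fun x : E => ‖x‖⁻¹ • x) ((‖·‖) ⁻¹' Icc a b) :=
    (continuous_norm.continuousOn.inv₀ fun x hx => (ha.trans_le hx.1).ne').smul
      continuousOn_id
  exact (hg.comp continuous_norm.continuousOn fun _ hx => hx).mul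
    (Complex.continuous_ofReal.comp_continuousOn (hY.comp_continuousOn hnormalize))

lemma continuous_solidEval {d : ℕ} (P : MvPolynomial (Fin d) ℝ) :
    Continuous (solidEval P) :=
  (MvPolynomial.continuous_eval P).comp (continuous_pi fun i => (continuous_apply i).comp
    (PiLp.continuous_ofLp 2 _))

lemma integrable_radial_mul_solidEval {d : ℕ} {a b : ℝ} (ha : 0 < a)
    {μ : Measure (EuclideanSpace ℝ (Fin d))} [IsFiniteMeasure μ]
    (hμ : μ {x | ¬(a < ‖x‖ ∧ ‖x‖ < b)} = 0) {g : ℝ → ℂ} (hg : ContinuousOn g (Icc a b))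
    (P : MvPolynomial (Fin d) ℝ) :
    Integrable (fun x => g ‖x‖ * (solidEval P (‖x‖⁻¹ • x) : ℂ)) μ :=
  (continuousOn_radial_mul_angular ha hg (continuous_solidEval P)).integrable_of_isCompact_of_ae_mem
    (isCompact_norm_preimage_Icc a b) ((ae_iff.2 hμ).mono fun _ hx => ⟨hx.1.le, hx.2.le⟩)

lemma integral_finsetSum_finsetSum {X E ι : Type*} {κ : ι → Type*} [MeasurableSpace X]
    [NormedAddCommGroup E] [NormedSpace ℝ E] {μ : Measure X} (s : Finset ι)
    (t : ∀ i, Finset (κ i)) {f : ∀ i, κ i → X → E}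
    (hf : ∀ i ∈ s, ∀ j ∈ t i, Integrable (f i j) μ) :
    ∫ x, ∑ i ∈ s, ∑ j ∈ t i, f i j x ∂μ = ∑ i ∈ s, ∑ j ∈ t i, ∫ x, f i j x ∂μ := by
  rw [integral_finsetSum _ fun i hi => integrable_finsetSum _ (hf i hi)]
  exact Finset.sum_congr rfl fun i hi => integral_finsetSum _ (hf i hi)

lemma integral_complex_eq_sub_of_forall_real {X : Type*} [MeasurableSpace X] {ν : Measure ℝ}
    {μ₁ μ₂ : Measure X} {S : Set ℝ} (ρ w : X → ℝ)
    (h : ∀ g : ℝ → ℝ, ContinuousOn g S →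
      ∫ r, g r ∂ν = (∫ x, g (ρ x) * w x ∂μ₁) - ∫ x, g (ρ x) * w x ∂μ₂)
    {g : ℝ → ℂ} (hg : ContinuousOn g S) (hν : Integrable g ν)
    (h₁ : Integrable (fun x => g (ρ x) * (w x : ℂ)) μ₁)
    (h₂ : Integrable (fun x => g (ρ x) * (w x : ℂ)) μ₂) :
    ∫ r, g r ∂ν = (∫ x, g (ρ x) * (w x : ℂ) ∂μ₁) - ∫ x, g (ρ x) * (w x : ℂ) ∂μ₂ := by
  apply Complex.ext
  · calc (∫ r, g r ∂ν).re = ∫ r, (g r).re ∂ν := (integral_re hν).symm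
      _ = (∫ x, (g (ρ x)).re * w x ∂μ₁) - ∫ x, (g (ρ x)).re * w x ∂μ₂ :=
          h _ (Complex.continuous_re.comp_continuousOn hg)
      _ = _ := by
          simp only [← Complex.re_mul_ofReal]
          exact congr_arg₂ (· - ·) (integral_re h₁) (integral_re h₂)
  · calc (∫ r, g r ∂ν).im = ∫ r, (g r).im ∂ν := (integral_im hν).symm
      _ = (∫ x, (g (ρ x)).im * w x ∂μ₁) - ∫ x, (g (ρ x)).im * w x ∂μ₂ :=
          h _ (Complex.continuous_im.comp_continuousOn hg)
      _ = _ := by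
          simp only [← Complex.im_mul_ofReal]
          exact congr_arg₂ (· - ·) (integral_im h₁) (integral_im h₂)

theorem polyharmonic_cubature_error_general (a' a b b' L : ℝ)
    (ha' : 0 < a') (h1 : a' < a) (h3 : b < b') (hL : 1 < L)
    (d N k₀ : ℕ)
    (ak : ℕ → ℕ) (B : SphericalONB d ak)
    -- the signed measure `μ = μ₁ - μ₂` with support in the annular region `A_{a,b}`
    (μ₁ μ₂ : Measure (EuclideanSpace ℝ (Fin d)))
    (hμ₁ : IsFiniteMeasure μ₁) (hμ₂ : IsFiniteMeasure μ₂)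
    (hsupp₁ : μ₁ {x : EuclideanSpace ℝ (Fin d) | ¬(a < ‖x‖ ∧ ‖x‖ < b)} = 0)
    (hsupp₂ : μ₂ {x : EuclideanSpace ℝ (Fin d) | ¬(a < ‖x‖ ∧ ‖x‖ < b)} = 0)
    -- the (nonnegative) component measures `μ_{k,ℓ}` of `μ`
    (μc : (k : ℕ) → (ℓ : Fin (ak k)) → Measure ℝ)
    (hμc : ∀ k ℓ, IsFiniteMeasure (μc k ℓ))
    (hμcsupp : ∀ k ℓ, (μc k ℓ) (Set.Icc a b)ᶜ = 0)
    (hμcdef : ∀ k ℓ (g : ℝ → ℝ), ContinuousOn g (Set.Icc a b) →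
      (∫ r, g r ∂(μc k ℓ)) =
        (∫ x, g ‖x‖ * solidEval (B.Y k ℓ) (‖x‖⁻¹ • x) ∂μ₁) -
          ∫ x, g ‖x‖ * solidEval (B.Y k ℓ) (‖x‖⁻¹ • x) ∂μ₂)
    -- the Gauss–Jacobi quadrature data: knots in `[a,b]`, nonnegative weights,
    -- exactness on `V_{k,d,2N}`
    (t : (k : ℕ) → Fin (ak k) → Fin (2 * N) → ℝ)
    (lam : (k : ℕ) → Fin (ak k) → Fin (2 * N) → ℝ)
    -- the component quadrature error constants `C_k`
    (C : ℕ → ℝ)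
    (hC : ∀ k (ℓ : Fin (ak k)) (g : ℂ → ℂ), MemH2k a' b' d k g →
      ‖((∫ r, g ((r : ℝ) : ℂ) ∂(μc k ℓ)) -
          ∑ j : Fin (2 * N), (lam k ℓ j : ℂ) * g ((t k ℓ j : ℝ) : ℂ))‖
        ≤ C k * Real.sqrt (hardyNormSq a' b' g))
    -- `f ∈ H_L²(𝒜_{a',b'})` with finite Laplace–Fourier expansion `Σ_{k ≤ k₀, ℓ}`
    (F : (k : ℕ) → Fin (ak k) → ℂ → ℂ)
    (hF : ∀ k ℓ, MemH2k a' b' d k (F k ℓ))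
    (hnorm : HLSummable a' b' L ak F) :
    ‖
      (((∫ x, (∑ k ∈ Finset.range (k₀ + 1), ∑ ℓ : Fin (ak k),
            F k ℓ ((‖x‖ : ℝ) : ℂ) * ((solidEval (B.Y k ℓ) (‖x‖⁻¹ • x) : ℝ) : ℂ)) ∂μ₁) -
         ∫ x, (∑ k ∈ Finset.range (k₀ + 1), ∑ ℓ : Fin (ak k),
            F k ℓ ((‖x‖ : ℝ) : ℂ) * ((solidEval (B.Y k ℓ) (‖x‖⁻¹ • x) : ℝ) : ℂ)) ∂μ₂) -
        ∑ k ∈ Finset.range (k₀ + 1), ∑ ℓ : Fin (ak k), ∑ j : Fin (2 * N),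
          (lam k ℓ j : ℂ) * F k ℓ ((t k ℓ j : ℝ) : ℂ))‖
      ≤ Real.sqrt (∑ k ∈ Finset.range (k₀ + 1), ∑ _ℓ : Fin (ak k), (C k) ^ 2 / L ^ (2 * k))
          * Real.sqrt (HLnormSq a' b' L ak F) := by
  have ha : 0 < a := ha'.trans h1
  have hFcont : ∀ k ℓ, ContinuousOn (fun r : ℝ => F k ℓ r) (Icc a b) := fun k ℓ =>
    (hF k ℓ).1.1.continuousOn.comp Complex.continuous_ofReal.continuousOn fun _ hr =>
      ofReal_mem_cAnnulus ha'.le (Icc_subset_Ioo h1 h3 hr)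
  have hG₁ := fun k ℓ => integrable_radial_mul_solidEval ha hsupp₁ (hFcont k ℓ) (B.Y k ℓ)
  have hG₂ := fun k ℓ => integrable_radial_mul_solidEval ha hsupp₂ (hFcont k ℓ) (B.Y k ℓ)
  have hcomponent : ∀ k ℓ, ∫ r, F k ℓ r ∂μc k ℓ =
      (∫ x, F k ℓ ‖x‖ * (solidEval (B.Y k ℓ) (‖x‖⁻¹ • x) : ℂ) ∂μ₁) -
        ∫ x, F k ℓ ‖x‖ * (solidEval (B.Y k ℓ) (‖x‖⁻¹ • x) : ℂ) ∂μ₂ := fun k ℓ =>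
    integral_complex_eq_sub_of_forall_real _ _ (hμcdef k ℓ) (hFcont k ℓ)
      ((hFcont k ℓ).integrable_of_isCompact_of_ae_mem isCompact_Icc
        (mem_ae_iff.2 (hμcsupp k ℓ))) (hG₁ k ℓ) (hG₂ k ℓ)
  set S := (Finset.range (k₀ + 1)).sigma fun k => (Finset.univ : Finset (Fin (ak k))) with hS
  calc _ = ‖∑ k ∈ Finset.range (k₀ + 1), ∑ ℓ : Fin (ak k), ((∫ r, F k ℓ r ∂μc k ℓ) -
        ∑ j : Fin (2 * N), (lam k ℓ j : ℂ) * F k ℓ (t k ℓ j))‖ := by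
        rw [integral_finsetSum_finsetSum _ _ fun k _ ℓ _ => hG₁ k ℓ,
          integral_finsetSum_finsetSum _ _ fun k _ ℓ _ => hG₂ k ℓ]
        simp only [hcomponent, Finset.sum_sub_distrib]
    _ ≤ ∑ k ∈ Finset.range (k₀ + 1), ∑ ℓ : Fin (ak k), C k * √(hardyNormSq a' b' (F k ℓ)) :=
        norm_sum_le_of_le _ fun k _ => norm_sum_le_of_le _ fun ℓ _ => hC k ℓ _ (hF k ℓ)
    _ = ∑ p ∈ S, C p.1 * √(hardyNormSq a' b' (F p.1 p.2)) := by rw [hS, Finset.sum_sigma]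
    _ ≤ √(∑ p ∈ S, C p.1 ^ 2 / L ^ (2 * p.1)) * √(HLnormSq a' b' L ak F) :=
        Real.sum_mul_sqrt_le_sqrt_sum_div_mul_sqrt_tsum _ _ _ _
          (fun _ => hardyNormSq_nonneg _ _ _) (fun _ => pow_pos (zero_lt_one.trans hL) _) hnorm
    _ = _ := by rw [hS, Finset.sum_sigma]

/-- Error estimate for the polyharmonic Gauss–Jacobi cubature formula on
the annular region `A_{a,b} ⊂ ℝ^d`, for a pseudo-positive signed measure `μ = μ₁ - μ₂` and a
function `f ∈ H_L²(𝒜_{a',b'})` with finite Laplace–Fourier expansion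
`f(rθ) = Σ_{k ≤ k₀, ℓ} f_{k,ℓ}(r) Y_{k,ℓ}(θ)`. -/
theorem polyharmonic_cubature_error (a' a b b' L : ℝ)
    (ha' : 0 < a') (h1 : a' < a) (h2 : a < b) (h3 : b < b') (hL : 1 < L)
    (d N k₀ : ℕ) (hd : 2 ≤ d) (hN : 1 ≤ N)
    (ak : ℕ → ℕ) (B : SphericalONB d ak)
    -- the signed measure `μ = μ₁ - μ₂` with support in the annular region `A_{a,b}`
    (μ₁ μ₂ : Measure (EuclideanSpace ℝ (Fin d)))
    (hμ₁ : IsFiniteMeasure μ₁) (hμ₂ : IsFiniteMeasure μ₂)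
    (hsupp₁ : μ₁ {x : EuclideanSpace ℝ (Fin d) | ¬(a < ‖x‖ ∧ ‖x‖ < b)} = 0)
    (hsupp₂ : μ₂ {x : EuclideanSpace ℝ (Fin d) | ¬(a < ‖x‖ ∧ ‖x‖ < b)} = 0)
    -- pseudo-positivity of `μ` with respect to the basis `Y_{k,ℓ}`
    (hpseudo : ∀ (k : ℕ) (ℓ : Fin (ak k)) (h : ℝ → ℝ), ContinuousOn h (Set.Icc a b) →
      (∀ r ∈ Set.Icc a b, 0 ≤ h r) →
      0 ≤ (∫ x, h ‖x‖ * solidEval (B.Y k ℓ) x ∂μ₁) -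
            ∫ x, h ‖x‖ * solidEval (B.Y k ℓ) x ∂μ₂)
    -- the (nonnegative) component measures `μ_{k,ℓ}` of `μ`
    (μc : (k : ℕ) → (ℓ : Fin (ak k)) → Measure ℝ)
    (hμc : ∀ k ℓ, IsFiniteMeasure (μc k ℓ))
    (hμcsupp : ∀ k ℓ, (μc k ℓ) (Set.Icc a b)ᶜ = 0)
    (hμcdef : ∀ k ℓ (g : ℝ → ℝ), ContinuousOn g (Set.Icc a b) →
      (∫ r, g r ∂(μc k ℓ)) =
        (∫ x, g ‖x‖ * solidEval (B.Y k ℓ) (‖x‖⁻¹ • x) ∂μ₁) -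
          ∫ x, g ‖x‖ * solidEval (B.Y k ℓ) (‖x‖⁻¹ • x) ∂μ₂)
    -- the Gauss–Jacobi quadrature data: knots in `[a,b]`, nonnegative weights,
    -- exactness on `V_{k,d,2N}`
    (t : (k : ℕ) → Fin (ak k) → Fin (2 * N) → ℝ)
    (ht : ∀ k ℓ j, t k ℓ j ∈ Set.Icc a b)
    (lam : (k : ℕ) → Fin (ak k) → Fin (2 * N) → ℝ)
    (hlam : ∀ k ℓ j, 0 ≤ lam k ℓ j)
    (hexact : ∀ k ℓ (p q : Fin (2 * N) → ℝ),
      (∫ s, (∑ j : Fin (2 * N),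
          (p j * s ^ (k + 2 * (j : ℕ)) + q j * s ^ (2 + 2 * ((j : ℕ) : ℤ) - d - k)))
            ∂(μc k ℓ))
        = ∑ i : Fin (2 * N), lam k ℓ i * (∑ j : Fin (2 * N),
            (p j * (t k ℓ i) ^ (k + 2 * (j : ℕ)) +
              q j * (t k ℓ i) ^ (2 + 2 * ((j : ℕ) : ℤ) - d - k))))
    -- the component quadrature error constants `C_k`
    (C : ℕ → ℝ)
    (hC : ∀ k (ℓ : Fin (ak k)) (g : ℂ → ℂ), MemH2k a' b' d k g →
      ‖((∫ r, g ((r : ℝ) : ℂ) ∂(μc k ℓ)) -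
          ∑ j : Fin (2 * N), (lam k ℓ j : ℂ) * g ((t k ℓ j : ℝ) : ℂ))‖
        ≤ C k * Real.sqrt (hardyNormSq a' b' g))
    -- `f ∈ H_L²(𝒜_{a',b'})` with finite Laplace–Fourier expansion `Σ_{k ≤ k₀, ℓ}`
    (F : (k : ℕ) → Fin (ak k) → ℂ → ℂ)
    (hF : ∀ k ℓ, MemH2k a' b' d k (F k ℓ))
    (hfinite : ∀ k, k₀ < k → ∀ ℓ, F k ℓ = 0)
    (hnorm : HLSummable a' b' L ak F) :
    ‖
      (((∫ x, (∑ k ∈ Finset.range (k₀ + 1), ∑ ℓ : Fin (ak k),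
            F k ℓ ((‖x‖ : ℝ) : ℂ) * ((solidEval (B.Y k ℓ) (‖x‖⁻¹ • x) : ℝ) : ℂ)) ∂μ₁) -
         ∫ x, (∑ k ∈ Finset.range (k₀ + 1), ∑ ℓ : Fin (ak k),
            F k ℓ ((‖x‖ : ℝ) : ℂ) * ((solidEval (B.Y k ℓ) (‖x‖⁻¹ • x) : ℝ) : ℂ)) ∂μ₂) -
        ∑ k ∈ Finset.range (k₀ + 1), ∑ ℓ : Fin (ak k), ∑ j : Fin (2 * N),
          (lam k ℓ j : ℂ) * F k ℓ ((t k ℓ j : ℝ) : ℂ))‖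
      ≤ Real.sqrt (∑ k ∈ Finset.range (k₀ + 1), ∑ _ℓ : Fin (ak k), (C k) ^ 2 / L ^ (2 * k))
          * Real.sqrt (HLnormSq a' b' L ak F) :=
  polyharmonic_cubature_error_general a' a b b' L ha' h1 h3 hL d N k₀ ak B μ₁ μ₂ hμ₁ hμ₂ hsupp₁
    hsupp₂ μc hμc hμcsupp hμcdef t lam C hC F hF hnorm
end
end
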